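/- Let φ solve the perturbation equation on I = (0, θR) with φ_s(0,t) = φ_s(θR,t) = 0 and the non-stretching identity 2 x^R_s · φ_s = −|φ_s|². Then d/dt ∫₀^{θR} φ₃(s,t) ds = (φ₁ₛ, φ₂ₛₛ) − (φ₂ₛ, φ₁ₛₛ) − (1/R)‖φ_s(t)‖², where (·,·) is the L² inner product. -/

import Mathlib

open MeasureTheory RealInnerProductSpace

noncomputable section

abbrev E3 := EuclideanSpace ℝ (Fin 3)

/-- Cross product on `ℝ³`. -/
def cross (u v : E3) : E3 :=
  (WithLp.equiv 2 (Fin 3 → ℝ)).symm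
    ![u 1 * v 2 - u 2 * v 1, u 2 * v 0 - u 0 * v 2, u 0 * v 1 - u 1 * v 0]

/-- Partial derivative in the first (space) variable. -/
def pd1 (f : ℝ → ℝ → E3) (s t : ℝ) : E3 := deriv (fun s' => f s' t) s

/-- Partial derivative in the second (time) variable. -/
def pd2 (f : ℝ → ℝ → E3) (s t : ℝ) : E3 := deriv (fun t' => f s t') t

/-- The arc-shaped filament. -/
def xR (R : ℝ) (s t : ℝ) : E3 :=
  (WithLp.equiv 2 (Fin 3 → ℝ)).symm ![R * Real.cos (s / R), R * Real.sin (s / R), t / R]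

lemma pd1_hasDerivAt {f : ℝ → ℝ → E3} (hf : ContDiff ℝ (⊤ : ℕ∞) (fun p : ℝ × ℝ => f p.1 p.2))
    (s t : ℝ) : HasDerivAt (fun s' => f s' t) (pd1 f s t) s := by
  have h1 : HasDerivAt (fun s' : ℝ => (s', t)) ((1:ℝ), (0:ℝ)) s :=
    (hasDerivAt_id s).prodMk (hasDerivAt_const s t)
  have h2 := ((hf.differentiable (by simp)) (s, t)).hasFDerivAt
  have h3 : HasDerivAt (fun s' => f s' t) (fderiv ℝ (fun p : ℝ × ℝ => f p.1 p.2) (s, t) (1, 0)) s := by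
    have := h2.comp_hasDerivAt s h1; exact this
  simpa [pd1, h3.deriv] using h3

lemma pd1_eq_fderiv {f : ℝ → ℝ → E3} (hf : ContDiff ℝ (⊤ : ℕ∞) (fun p : ℝ × ℝ => f p.1 p.2))
    (s t : ℝ) :
    pd1 f s t = fderiv ℝ (fun p : ℝ × ℝ => f p.1 p.2) (s, t) (1, 0) := by
  have h1 : HasDerivAt (fun s' : ℝ => (s', t)) ((1:ℝ), (0:ℝ)) s :=
    (hasDerivAt_id s).prodMk (hasDerivAt_const s t)
  have h2 := ((hf.differentiable (by simp)) (s, t)).hasFDerivAt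
  have h3 : HasDerivAt (fun s' => f s' t) (fderiv ℝ (fun p : ℝ × ℝ => f p.1 p.2) (s, t) (1, 0)) s := by
    have := h2.comp_hasDerivAt s h1; exact this
  exact h3.deriv

lemma pd2_hasDerivAt {f : ℝ → ℝ → E3} (hf : ContDiff ℝ (⊤ : ℕ∞) (fun p : ℝ × ℝ => f p.1 p.2))
    (s t : ℝ) : HasDerivAt (fun t' => f s t') (pd2 f s t) t := by
  have h1 : HasDerivAt (fun t' : ℝ => (s, t')) ((0:ℝ), (1:ℝ)) t :=
    (hasDerivAt_const t s).prodMk (hasDerivAt_id t)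
  have h2 := ((hf.differentiable (by simp)) (s, t)).hasFDerivAt
  have h3 : HasDerivAt (fun t' => f s t') (fderiv ℝ (fun p : ℝ × ℝ => f p.1 p.2) (s, t) (0, 1)) t :=
    h2.comp_hasDerivAt t h1
  simpa [pd2, h3.deriv] using h3

lemma pd2_eq_fderiv {f : ℝ → ℝ → E3} (hf : ContDiff ℝ (⊤ : ℕ∞) (fun p : ℝ × ℝ => f p.1 p.2))
    (s t : ℝ) :
    pd2 f s t = fderiv ℝ (fun p : ℝ × ℝ => f p.1 p.2) (s, t) (0, 1) := by
  have h1 : HasDerivAt (fun t' : ℝ => (s, t')) ((0:ℝ), (1:ℝ)) t :=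
    (hasDerivAt_const t s).prodMk (hasDerivAt_id t)
  have h2 := ((hf.differentiable (by simp)) (s, t)).hasFDerivAt
  have h3 : HasDerivAt (fun t' => f s t') (fderiv ℝ (fun p : ℝ × ℝ => f p.1 p.2) (s, t) (0, 1)) t :=
    h2.comp_hasDerivAt t h1
  exact h3.deriv

lemma pd1_contDiff {f : ℝ → ℝ → E3} (hf : ContDiff ℝ (⊤ : ℕ∞) (fun p : ℝ × ℝ => f p.1 p.2)) :
    ContDiff ℝ (⊤ : ℕ∞) (fun p : ℝ × ℝ => pd1 f p.1 p.2) := by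
  have : (fun p : ℝ × ℝ => pd1 f p.1 p.2)
      = fun p : ℝ × ℝ => fderiv ℝ (fun q : ℝ × ℝ => f q.1 q.2) p ((1:ℝ), (0:ℝ)) := by
    funext p; exact pd1_eq_fderiv hf p.1 p.2
  rw [this]
  exact (hf.fderiv_right (by simp)).clm_apply contDiff_const

lemma pd2_contDiff {f : ℝ → ℝ → E3} (hf : ContDiff ℝ (⊤ : ℕ∞) (fun p : ℝ × ℝ => f p.1 p.2)) :
    ContDiff ℝ (⊤ : ℕ∞) (fun p : ℝ × ℝ => pd2 f p.1 p.2) := by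
  have : (fun p : ℝ × ℝ => pd2 f p.1 p.2)
      = fun p : ℝ × ℝ => fderiv ℝ (fun q : ℝ × ℝ => f q.1 q.2) p ((0:ℝ), (1:ℝ)) := by
    funext p; exact pd2_eq_fderiv hf p.1 p.2
  rw [this]
  exact (hf.fderiv_right (by simp)).clm_apply contDiff_const

lemma apply_hasDerivAt {g : ℝ → E3} {v : E3} {s : ℝ} (h : HasDerivAt g v s) (i : Fin 3) :
    HasDerivAt (fun x => g x i) (v i) s :=
  (EuclideanSpace.proj (𝕜 := ℝ) i).hasFDerivAt.comp_hasDerivAt s h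

def e3 (a b c : ℝ) : E3 := (WithLp.equiv 2 (Fin 3 → ℝ)).symm ![a, b, c]

lemma hasDerivAt_e3 {a b c : ℝ → ℝ} {a' b' c' x : ℝ}
    (ha : HasDerivAt a a' x) (hb : HasDerivAt b b' x) (hc : HasDerivAt c c' x) :
    HasDerivAt (fun s => e3 (a s) (b s) (c s)) (e3 a' b' c') x := by
  have hp : HasDerivAt (fun s => (![a s, b s, c s] : Fin 3 → ℝ)) ![a', b', c'] x := by
    rw [hasDerivAt_pi]
    intro i
    fin_cases i
    · simpa using ha
    · simpa using hb
    · simpa using hc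
  exact ((PiLp.continuousLinearEquiv 2 ℝ (fun _ : Fin 3 => ℝ)).symm :
      (Fin 3 → ℝ) →L[ℝ] E3).hasFDerivAt.comp_hasDerivAt x hp

lemma hasDerivAt_Rcos {R : ℝ} (hR : R ≠ 0) (s : ℝ) :
    HasDerivAt (fun s' => R * Real.cos (s' / R)) (-Real.sin (s / R)) s := by
  have h1 : HasDerivAt (fun s' : ℝ => s' / R) (1 / R) s := by
    simpa using (hasDerivAt_id s).div_const R
  have h3 := ((Real.hasDerivAt_cos (s / R)).comp s h1).const_mul R
  exact h3.congr_deriv (by field_simp)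

lemma hasDerivAt_Rsin {R : ℝ} (hR : R ≠ 0) (s : ℝ) :
    HasDerivAt (fun s' => R * Real.sin (s' / R)) (Real.cos (s / R)) s := by
  have h1 : HasDerivAt (fun s' : ℝ => s' / R) (1 / R) s := by
    simpa using (hasDerivAt_id s).div_const R
  have h3 := ((Real.hasDerivAt_sin (s / R)).comp s h1).const_mul R
  exact h3.congr_deriv (by field_simp)

lemma hasDerivAt_negsin {R : ℝ} (hR : R ≠ 0) (s : ℝ) :
    HasDerivAt (fun s' => -Real.sin (s' / R)) (-(Real.cos (s / R) / R)) s := by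
  have h1 : HasDerivAt (fun s' : ℝ => s' / R) (1 / R) s := by
    simpa using (hasDerivAt_id s).div_const R
  have h2 := ((Real.hasDerivAt_sin (s / R)).comp s h1).neg
  exact h2.congr_deriv (by field_simp)

lemma hasDerivAt_cosR {R : ℝ} (hR : R ≠ 0) (s : ℝ) :
    HasDerivAt (fun s' => Real.cos (s' / R)) (-(Real.sin (s / R) / R)) s := by
  have h1 : HasDerivAt (fun s' : ℝ => s' / R) (1 / R) s := by
    simpa using (hasDerivAt_id s).div_const R
  have h2 := (Real.hasDerivAt_cos (s / R)).comp s h1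
  exact h2.congr_deriv (by field_simp)

lemma xR_hasDerivAt {R : ℝ} (hR : R ≠ 0) (s t : ℝ) :
    HasDerivAt (fun s' => xR R s' t) (e3 (-Real.sin (s / R)) (Real.cos (s / R)) 0) s := by
  have h : (fun s' => xR R s' t)
      = fun s' => e3 (R * Real.cos (s' / R)) (R * Real.sin (s' / R)) (t / R) := rfl
  rw [h]
  exact hasDerivAt_e3 (hasDerivAt_Rcos hR s) (hasDerivAt_Rsin hR s) (hasDerivAt_const s (t / R))

lemma xR_pd1 {R : ℝ} (hR : R ≠ 0) (s t : ℝ) :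
    pd1 (xR R) s t = e3 (-Real.sin (s / R)) (Real.cos (s / R)) 0 :=
  (xR_hasDerivAt hR s t).deriv

lemma xR_pd1_pd1 {R : ℝ} (hR : R ≠ 0) (s t : ℝ) :
    pd1 (pd1 (xR R)) s t = e3 (-(Real.cos (s / R) / R)) (-(Real.sin (s / R) / R)) 0 := by
  have h : (fun s' => pd1 (xR R) s' t)
      = fun s' => e3 (-Real.sin (s' / R)) (Real.cos (s' / R)) 0 := by
    funext s'; exact xR_pd1 hR s' t
  have hd : HasDerivAt (fun s' => pd1 (xR R) s' t)
      (e3 (-(Real.cos (s / R) / R)) (-(Real.sin (s / R) / R)) 0) s := by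
    rw [h]
    exact hasDerivAt_e3 (hasDerivAt_negsin hR s) (hasDerivAt_cosR hR s) (hasDerivAt_const s 0)
  exact hd.deriv

@[simp] lemma e3_apply_0 (a b c : ℝ) : e3 a b c 0 = a := rfl
@[simp] lemma e3_apply_1 (a b c : ℝ) : e3 a b c 1 = b := rfl
@[simp] lemma e3_apply_2 (a b c : ℝ) : e3 a b c 2 = c := rfl

lemma cross_apply_2 (u v : E3) : cross u v 2 = u 0 * v 1 - u 1 * v 0 := rfl

lemma inner_expand (x y : E3) : ⟪x, y⟫ = x 0 * y 0 + x 1 * y 1 + x 2 * y 2 := by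
  simp [PiLp.inner_apply, Fin.sum_univ_three, RCLike.inner_apply, mul_comm]

lemma norm_sq_expand (x : E3) : ‖x‖ ^ 2 = x 0 ^ 2 + x 1 ^ 2 + x 2 ^ 2 := by
  rw [← real_inner_self_eq_norm_sq, inner_expand]; ring

/-- evolution of the integral mean of the third component. -/
theorem third_component_mean_evolution (R θ : ℝ) (hR : 0 < R) (hθ : 0 < θ)
    (φ : ℝ → ℝ → E3)
    (hsmooth : ContDiff ℝ (⊤ : ℕ∞) (fun p : ℝ × ℝ => φ p.1 p.2))
    (heq : ∀ s ∈ Set.Ioo (0:ℝ) (θ * R), ∀ t : ℝ, 0 < t →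
      pd2 φ s t = cross (pd1 φ s t) (pd1 (pd1 φ) s t)
        + cross (pd1 (xR R) s t) (pd1 (pd1 φ) s t)
        + cross (pd1 φ s t) (pd1 (pd1 (xR R)) s t))
    (hbc : ∀ t : ℝ, 0 ≤ t → pd1 φ 0 t = 0 ∧ pd1 φ (θ * R) t = 0)
    (hns : ∀ s ∈ Set.Icc (0:ℝ) (θ * R), ∀ t : ℝ, 0 ≤ t →
      2 * ⟪pd1 (xR R) s t, pd1 φ s t⟫ = -‖pd1 φ s t‖ ^ 2) :
    ∀ t : ℝ, 0 < t →
      deriv (fun τ => ∫ s in (0:ℝ)..(θ * R), φ s τ 2) t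
        = (∫ s in (0:ℝ)..(θ * R), pd1 φ s t 0 * pd1 (pd1 φ) s t 1)
          - (∫ s in (0:ℝ)..(θ * R), pd1 φ s t 1 * pd1 (pd1 φ) s t 0)
          - (1 / R) * ∫ s in (0:ℝ)..(θ * R), ‖pd1 φ s t‖ ^ 2 := by
  intro t ht
  have hRne : R ≠ 0 := ne_of_gt hR
  have hL : 0 < θ * R := mul_pos hθ hR
  set L := θ * R with hLdef
  -- smoothness of derivatives
  have hP1 : ContDiff ℝ (⊤ : ℕ∞) (fun p : ℝ × ℝ => pd1 φ p.1 p.2) := pd1_contDiff hsmooth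
  have hP11 : ContDiff ℝ (⊤ : ℕ∞) (fun p : ℝ × ℝ => pd1 (pd1 φ) p.1 p.2) := pd1_contDiff hP1
  have hP2 : ContDiff ℝ (⊤ : ℕ∞) (fun p : ℝ × ℝ => pd2 φ p.1 p.2) := pd2_contDiff hsmooth
  -- continuity in s at time t
  have embt : Continuous (fun s : ℝ => (s, t)) := continuous_id.prodMk continuous_const
  have cu : Continuous (fun s => pd1 φ s t) := hP1.continuous.comp embt
  have cw : Continuous (fun s => pd1 (pd1 φ) s t) := hP11.continuous.comp embt
  have cui : ∀ i : Fin 3, Continuous (fun s => pd1 φ s t i) := fun i =>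
    (EuclideanSpace.proj (𝕜 := ℝ) i).continuous.comp cu
  have cwi : ∀ i : Fin 3, Continuous (fun s => pd1 (pd1 φ) s t i) := fun i =>
    (EuclideanSpace.proj (𝕜 := ℝ) i).continuous.comp cw
  -- Step A: differentiation under the integral sign
  have cp2 : Continuous (fun p : ℝ × ℝ => pd2 φ p.1 p.2 2) :=
    (EuclideanSpace.proj (𝕜 := ℝ) (2 : Fin 3)).continuous.comp hP2.continuous
  obtain ⟨C, hC⟩ := (isCompact_Icc.prod (isCompact_Icc (a := t - 1) (b := t + 1))
    (s := Set.Icc (0:ℝ) L)).exists_bound_of_continuousOn cp2.continuousOn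
  have hderiv : HasDerivAt (fun τ => ∫ s in (0:ℝ)..L, φ s τ 2)
      (∫ s in (0:ℝ)..L, pd2 φ s t 2) t := by
    have := intervalIntegral.hasDerivAt_integral_of_dominated_loc_of_deriv_le
      (F := fun τ s => φ s τ 2) (F' := fun τ s => pd2 φ s τ 2) (x₀ := t)
      (a := 0) (b := L) (μ := volume) (bound := fun _ => |C|) (s := Metric.ball t 1) (Metric.ball_mem_nhds t one_pos)
      ?_ ?_ ?_ ?_ ?_ ?_
    · exact this.2
    · refine Filter.Eventually.of_forall (fun τ => ?_)
      exact ((((EuclideanSpace.proj (𝕜 := ℝ) (2 : Fin 3)).continuous.comp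
        (hsmooth.continuous.comp (continuous_id.prodMk continuous_const)))).aestronglyMeasurable)
    · exact (((EuclideanSpace.proj (𝕜 := ℝ) (2 : Fin 3)).continuous.comp
        (hsmooth.continuous.comp embt))).intervalIntegrable 0 L
    · exact ((cp2.comp embt)).aestronglyMeasurable
    · refine Filter.Eventually.of_forall (fun s hs τ hτ => ?_)
      have hs' : s ∈ Set.Icc (0:ℝ) L := by
        rw [Set.uIoc_of_le hL.le] at hs
        exact ⟨hs.1.le, hs.2⟩
      have hτ' : τ ∈ Set.Icc (t - 1) (t + 1) := by
        rw [Metric.mem_ball, Real.dist_eq, abs_lt] at hτ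
        constructor <;> linarith [hτ.1, hτ.2]
      calc ‖pd2 φ s τ 2‖ ≤ C := hC (s, τ) ⟨hs', hτ'⟩
        _ ≤ |C| := le_abs_self C
    · exact intervalIntegrable_const
    · refine Filter.Eventually.of_forall (fun s hs τ hτ => ?_)
      exact apply_hasDerivAt (pd2_hasDerivAt hsmooth s τ) 2
  rw [hderiv.deriv]
  -- the auxiliary function g and its derivative
  set g : ℝ → ℝ := fun s => -Real.sin (s / R) * pd1 φ s t 1 - Real.cos (s / R) * pd1 φ s t 0
    with hgdef
  set g' : ℝ → ℝ := fun s =>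
      (-(Real.cos (s / R) / R) * pd1 φ s t 1 + -Real.sin (s / R) * pd1 (pd1 φ) s t 1)
      - (-(Real.sin (s / R) / R) * pd1 φ s t 0 + Real.cos (s / R) * pd1 (pd1 φ) s t 0)
    with hg'def
  have hu : ∀ (s : ℝ) (i : Fin 3),
      HasDerivAt (fun s' => pd1 φ s' t i) (pd1 (pd1 φ) s t i) s := fun s i =>
    apply_hasDerivAt (pd1_hasDerivAt hP1 s t) i
  have hg : ∀ s, HasDerivAt g (g' s) s := by
    intro s
    exact ((hasDerivAt_negsin hRne s).mul (hu s 1)).sub ((hasDerivAt_cosR hRne s).mul (hu s 0))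
  have cg' : Continuous g' := by
    apply Continuous.sub
    · exact ((((Real.continuous_cos.comp (continuous_id.div_const R)).div_const R).neg).mul
        (cui 1)).add (((Real.continuous_sin.comp (continuous_id.div_const R)).neg).mul (cwi 1))
    · exact ((((Real.continuous_sin.comp (continuous_id.div_const R)).div_const R).neg).mul
        (cui 0)).add ((Real.continuous_cos.comp (continuous_id.div_const R)).mul (cwi 0))
  -- pointwise identity on the open interval
  have key : ∀ s ∈ Set.Ioo (0:ℝ) L, pd2 φ s t 2
      = (pd1 φ s t 0 * pd1 (pd1 φ) s t 1 - pd1 φ s t 1 * pd1 (pd1 φ) s t 0)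
        + g' s - (1 / R) * ‖pd1 φ s t‖ ^ 2 := by
    intro s hs
    have he := heq s hs t ht
    have he2 : pd2 φ s t 2
        = cross (pd1 φ s t) (pd1 (pd1 φ) s t) 2
          + cross (pd1 (xR R) s t) (pd1 (pd1 φ) s t) 2
          + cross (pd1 φ s t) (pd1 (pd1 (xR R)) s t) 2 := by
      rw [he]; simp [PiLp.add_apply]
    rw [cross_apply_2, cross_apply_2, cross_apply_2, xR_pd1 hRne, xR_pd1_pd1 hRne] at he2
    simp only [e3_apply_0, e3_apply_1] at he2
    have hinner := hns s ⟨hs.1.le, hs.2.le⟩ t ht.le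
    rw [inner_expand, xR_pd1 hRne] at hinner
    simp only [e3_apply_0, e3_apply_1, e3_apply_2] at hinner
    simp only [hg'def]
    linear_combination he2 + (1 / R) * hinner
  -- integrability of pieces
  have i1 : IntervalIntegrable (fun s => pd1 φ s t 0 * pd1 (pd1 φ) s t 1) volume 0 L :=
    ((cui 0).mul (cwi 1)).intervalIntegrable 0 L
  have i2 : IntervalIntegrable (fun s => pd1 φ s t 1 * pd1 (pd1 φ) s t 0) volume 0 L :=
    ((cui 1).mul (cwi 0)).intervalIntegrable 0 L
  have i3 : IntervalIntegrable g' volume 0 L := cg'.intervalIntegrable 0 L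
  have i4 : IntervalIntegrable (fun s => ‖pd1 φ s t‖ ^ 2) volume 0 L :=
    ((cu.norm).pow 2).intervalIntegrable 0 L
  have i4' : IntervalIntegrable (fun s => (1 / R) * ‖pd1 φ s t‖ ^ 2) volume 0 L :=
    (i4.const_mul _)
  -- replace the integrand a.e.
  have hcongr : (∫ s in (0:ℝ)..L, pd2 φ s t 2)
      = ∫ s in (0:ℝ)..L,
          ((pd1 φ s t 0 * pd1 (pd1 φ) s t 1 - pd1 φ s t 1 * pd1 (pd1 φ) s t 0)
            + g' s - (1 / R) * ‖pd1 φ s t‖ ^ 2) := by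
    apply intervalIntegral.integral_congr_ae
    filter_upwards [(Set.countable_singleton L).ae_notMem volume] with s hsL hs
    rw [Set.uIoc_of_le hL.le] at hs
    have : s ∈ Set.Ioo (0:ℝ) L := ⟨hs.1, lt_of_le_of_ne hs.2 (by simpa using hsL)⟩
    exact key s this
  rw [hcongr]
  -- split the integral
  rw [intervalIntegral.integral_sub ((i1.sub i2).add i3) i4',
    intervalIntegral.integral_add (i1.sub i2) i3,
    intervalIntegral.integral_sub i1 i2,
    intervalIntegral.integral_const_mul]
  -- fundamental theorem of calculus for g'
  have hgint : (∫ s in (0:ℝ)..L, g' s) = g L - g 0 :=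
    intervalIntegral.integral_eq_sub_of_hasDerivAt (fun s _ => hg s) i3
  have hg0 : g 0 = 0 := by
    simp [hgdef, (hbc t ht.le).1, PiLp.zero_apply]
  have hgL : g L = 0 := by
    simp [hgdef, (hbc t ht.le).2, PiLp.zero_apply]
  rw [hgint, hg0, hgL]
  ring
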